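/- Let A ∈ ℝ^{2n×2n} and B ∈ ℝ^{2n×2m}. Then A J_n + J_n A^T + B J_m B^T = 0 if and only if there exists a symmetric matrix R = R^T ∈ ℝ^{2n×2n} such that A = J_n R + (1/2) B J_m B^T J_n. -/
import Mathlib


open Matrix Kronecker

/-- Canonical symplectic matrix `J_k = I_k ⊗ [[0,1],[-1,0]]`. -/
def J (k : ℕ) : Matrix (Fin k × Fin 2) (Fin k × Fin 2) ℝ :=
  (1 : Matrix (Fin k) (Fin k) ℝ) ⊗ₖ !![0, 1; -1, 0]

lemma myJ_transpose (k : ℕ) : (J k)ᵀ = -(J k) := by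
  ext ⟨i, a⟩ ⟨j, b⟩
  simp only [_root_.J, Matrix.transpose_apply, Matrix.kroneckerMap_apply, Matrix.neg_apply,
    Matrix.one_apply]
  fin_cases a <;> fin_cases b <;> by_cases h : i = j <;> simp [h, eq_comm]

lemma myJ_sq (k : ℕ) : J k * J k = -1 := by
  unfold _root_.J
  rw [← Matrix.mul_kronecker_mul, one_mul]
  have : (!![0, 1; -1, 0] : Matrix (Fin 2) (Fin 2) ℝ) * !![0, 1; -1, 0] = -1 := by
    norm_num [← Matrix.ext_iff, Matrix.mul_apply, Fin.forall_fin_two, Fin.sum_univ_two,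
      Matrix.one_apply]
  rw [this]
  ext ⟨i, a⟩ ⟨j, b⟩
  simp only [Matrix.kroneckerMap_apply, Matrix.neg_apply, Matrix.one_apply, Prod.ext_iff]
  split_ifs <;> simp_all

lemma aux1 {α : Type*} [Ring α] (j a b s : α) (hj : j * j = -1)
    (h : a * j + j * b + s = 0) : j * s * j = j * a + b * j := by
  linear_combination (norm := noncomm_ring) j * h * j - j * a * hj - hj * b * j

lemma aux2 {α : Type*} [Ring α] (j a s : α) (hj : j * j = -1) :
    j * (-(j * a) + j * s * j) + s * j = a := by
  linear_combination (norm := noncomm_ring) - hj * a + hj * s * j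

lemma aux3 {α : Type*} [Ring α] (j r s a b : α) (hj : j * j = -1)
    (h1 : a = j * r + s * j) (h2 : b = -(r * j) + j * s) :
    a * j + j * b + (s + s) = 0 := by
  linear_combination (norm := noncomm_ring) h1 * j + j * h2 + s * hj + hj * s

theorem stmt8 (n m : ℕ)
    (A : Matrix (Fin n × Fin 2) (Fin n × Fin 2) ℝ)
    (B : Matrix (Fin n × Fin 2) (Fin m × Fin 2) ℝ) :
    A * J n + J n * Aᵀ + B * J m * Bᵀ = 0 ↔
    ∃ R : Matrix (Fin n × Fin 2) (Fin n × Fin 2) ℝ,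
      Rᵀ = R ∧ A = J n * R + (1 / 2 : ℝ) • (B * J m * Bᵀ * J n) := by
  set S' : Matrix (Fin n × Fin 2) (Fin n × Fin 2) ℝ :=
    (1 / 2 : ℝ) • (B * J m * Bᵀ) with hS'
  have hBB : B * J m * Bᵀ = S' + S' := by
    rw [hS', ← add_smul]; norm_num
  have hsmul : (1 / 2 : ℝ) • (B * J m * Bᵀ * J n) = S' * J n := by
    rw [hS', Matrix.smul_mul]
  have hS'T : S'ᵀ = -S' := by
    rw [hS', Matrix.transpose_smul, Matrix.transpose_mul, Matrix.transpose_mul,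
      Matrix.transpose_transpose, myJ_transpose, Matrix.neg_mul, Matrix.mul_neg,
      Matrix.mul_assoc, smul_neg]
  have hJT := myJ_transpose n
  have hJJ := myJ_sq n
  rw [hsmul, hBB]
  constructor
  · intro h
    refine ⟨-(J n * A) + J n * S' * J n, ?_, ?_⟩
    · have key : J n * (S' + S') * J n = J n * A + Aᵀ * J n := aux1 _ _ _ _ hJJ h
      rw [Matrix.transpose_add, Matrix.transpose_neg, Matrix.transpose_mul, hJT,
        Matrix.transpose_mul, Matrix.transpose_mul, hJT, hS'T]
      linear_combination (norm := noncomm_ring) -key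
    · exact (aux2 (J n) A S' hJJ).symm
  · rintro ⟨R, hRT, hA⟩
    have hAT : Aᵀ = -(R * J n) + J n * S' := by
      rw [hA, Matrix.transpose_add, Matrix.transpose_mul, hJT, Matrix.transpose_mul, hJT,
        hS'T, hRT]
      noncomm_ring
    exact aux3 (J n) R S' A Aᵀ hJJ hA hAT
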